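/- Let {A_v}_{v∈V} be a finite collection of events in a probability space, where the index set V is the vertex set of a chordal graph G. Then Σ_{I∈𝒞(G)} (−1)^{|I|−1} · Pr(⋂_{i∈I} A_i) ≥ 0, i.e., the alternating sum of intersection probabilities over the clique complex of a chordal graph is non-negative. -/

import Mathlib

open MeasureTheory Finset
open scoped Classical

/-- A graph is chordal if it contains no induced cycle of length four or greater. -/
def SimpleGraph.IsChordal {V : Type*} (G : SimpleGraph V) : Prop :=
  ∀ n : ℕ, 4 ≤ n → ∀ s : Set V, ¬ Nonempty (G.induce s ≃g SimpleGraph.cycleGraph n)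

/-- The clique complex of `G`: the collection of all non-empty cliques of `G`. -/
noncomputable def SimpleGraph.cliqueComplex {V : Type*} [Fintype V] (G : SimpleGraph V) :
    Finset (Finset V) :=
  Finset.univ.powerset.filter fun I => I.Nonempty ∧ G.IsClique (I : Set V)

/-- The independence number of `G`: the maximum size of a set of pairwise
non-adjacent vertices. -/
noncomputable def SimpleGraph.indepNum' {V : Type*} [Fintype V] (G : SimpleGraph V) : ℕ :=
  sSup {n | ∃ s : Finset V, ((s : Set V).Pairwise fun v w => ¬ G.Adj v w) ∧ s.card = n}

/-!
Fix `ω` and let `S` be the set of vertices `v` with `ω ∈ A v`. Integrating indicator functions,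
the alternating sum is the expectation of `χ(S) = ∑ (-1) ^ (#I - 1)`, the sum over the non-empty
cliques `I ⊆ S`, i.e. the Euler characteristic of the clique complex of `G[S]`; so it suffices
that `χ(S) ≥ 0`. Splitting off a vertex `v ∈ S`, with `T = S \ {v}` and `N` the neighbours of `v` in
`T`, gives `χ(S) = χ(T) + 1 - χ(N)`. When `G` is chordal the number of connected components
satisfies the same recursion: the components of `G[S]` are those of `G[T]` not meeting `N` together
with the one of `v`, and two vertices of `N` joined by a path in `T` are joined inside `N`, since
otherwise a shortest such path closes an induced cycle of length at least four through `v`. Hence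
`χ(S)` is the number of components of `G[S]`.
-/

namespace SimpleGraph

variable {V : Type*} {G : SimpleGraph V}

section Geodesic

variable {u w : V} {p : G.Walk u w} {i j : ℕ}

lemma Walk.le_of_getVert_eq_of_length_eq_dist (hp : p.length = G.dist u w)
    (hj : j ≤ p.length) (h : p.getVert i = p.getVert j) : j ≤ i := by
  have := G.dist_le ((p.take i).append ((p.drop j).copy h.symm rfl))
  simp only [Walk.length_append, Walk.length_copy, Walk.take_length, Walk.drop_length] at this
  omega

lemma Walk.le_succ_of_adj_getVert_of_length_eq_dist (hp : p.length = G.dist u w)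
    (hj : j ≤ p.length) (h : G.Adj (p.getVert i) (p.getVert j)) : j ≤ i + 1 := by
  have := G.dist_le ((p.take i).append (.cons h (p.drop j)))
  simp only [Walk.length_append, Walk.length_cons, Walk.take_length, Walk.drop_length] at this
  omega

lemma Walk.eq_of_getVert_eq_of_length_eq_dist (hp : p.length = G.dist u w)
    (hi : i ≤ p.length) (hj : j ≤ p.length) (h : p.getVert i = p.getVert j) : i = j :=
  le_antisymm (le_of_getVert_eq_of_length_eq_dist hp hi h.symm)
    (le_of_getVert_eq_of_length_eq_dist hp hj h)

lemma Walk.adj_getVert_iff_of_length_eq_dist (hp : p.length = G.dist u w)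
    (hi : i ≤ p.length) (hj : j ≤ p.length) :
    G.Adj (p.getVert i) (p.getVert j) ↔ i + 1 = j ∨ j + 1 = i := by
  refine ⟨fun h => ?_, ?_⟩
  · have := le_succ_of_adj_getVert_of_length_eq_dist hp hj h
    have := le_succ_of_adj_getVert_of_length_eq_dist hp hi h.symm
    have : i ≠ j := by rintro rfl; exact G.loopless.irrefl _ h
    omega
  · rintro (rfl | rfl)
    · exact p.adj_getVert_succ (by omega)
    · exact (p.adj_getVert_succ (by omega)).symm

end Geodesic

lemma cycleGraph_adj_iff_val {k : ℕ} {a b : Fin (k + 2)} :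
    (cycleGraph (k + 2)).Adj a b ↔ (a : ℕ) + 1 = b ∨ (b : ℕ) + 1 = a ∨
      ((a : ℕ) = 0 ∧ (b : ℕ) = k + 1) ∨ ((a : ℕ) = k + 1 ∧ (b : ℕ) = 0) := by
  have := a.isLt
  have := b.isLt
  rw [cycleGraph_adj']
  rcases lt_trichotomy a b with hab | rfl | hab
  · rw [Fin.coe_sub_iff_lt.mpr hab, Fin.coe_sub_iff_le.mpr hab.le]
    rw [Fin.lt_def] at hab
    omega
  · simp only [sub_self, Fin.val_zero]
    omega
  · rw [Fin.coe_sub_iff_lt.mpr hab, Fin.coe_sub_iff_le.mpr hab.le]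
    rw [Fin.lt_def] at hab
    omega

lemma cycleGraph_isIndContained_of_apex {k : ℕ} {c : ℕ → V} {v : V}
    (hinj : ∀ i ≤ k, ∀ j ≤ k, c i = c j → i = j)
    (hadj : ∀ i ≤ k, ∀ j ≤ k, G.Adj (c i) (c j) ↔ i + 1 = j ∨ j + 1 = i)
    (hvadj : ∀ i ≤ k, G.Adj v (c i) ↔ i = 0 ∨ i = k)
    (hne : ∀ i ≤ k, c i ≠ v) :
    cycleGraph (k + 2) ⊴ G := by
  let f : Fin (k + 2) → V := fun a => if (a : ℕ) ≤ k then c a else v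
  refine ⟨⟨⟨f, fun a b hab => ?_⟩, fun {a b} => ?_⟩⟩
  · have := a.isLt; have := b.isLt
    simp only [f] at hab
    split_ifs at hab with ha hb hb
    · exact Fin.ext (hinj _ ha _ hb hab)
    · exact absurd hab (hne _ ha)
    · exact absurd hab.symm (hne _ hb)
    · exact Fin.ext (by omega)
  · rw [cycleGraph_adj_iff_val]
    have := a.isLt; have := b.isLt
    show G.Adj (f a) (f b) ↔ _
    simp only [f]
    split_ifs with ha hb hb
    · rw [hadj _ ha _ hb]; omega
    · rw [G.adj_comm, hvadj _ ha]; omega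
    · rw [hvadj _ hb]; omega
    · simp only [G.irrefl, false_iff]; omega

lemma IsChordal.not_cycleGraph_isIndContained (hG : G.IsChordal) {n : ℕ} (hn : 4 ≤ n) :
    ¬ cycleGraph n ⊴ G := fun h => by
  obtain ⟨s, ⟨e⟩⟩ := isIndContained_iff_exists_iso_induce.mp h
  exact hG n hn s ⟨e.symm⟩

/-- `G[s]` on the whole vertex type: vertices outside `s` become isolated, so that the
components of `G[s]` are the classes of vertices of `s` under reachability. -/
def spanningInduce (G : SimpleGraph V) (s : Set V) : SimpleGraph V where
  Adj a b := a ∈ s ∧ b ∈ s ∧ G.Adj a b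
  symm := ⟨fun _ _ h => ⟨h.2.1, h.1, h.2.2.symm⟩⟩
  loopless := ⟨fun _ h => G.irrefl h.2.2⟩

section spanningInduce

variable {s t : Set V} {u w : V}

@[simp]
lemma spanningInduce_adj :
    (G.spanningInduce s).Adj u w ↔ u ∈ s ∧ w ∈ s ∧ G.Adj u w := .rfl

lemma spanningInduce_mono (h : s ⊆ t) : G.spanningInduce s ≤ G.spanningInduce t :=
  fun _ _ hadj => ⟨h hadj.1, h hadj.2.1, hadj.2.2⟩

lemma Walk.getVert_mem_of_spanningInduce (p : (G.spanningInduce s).Walk u w) (hu : u ∈ s)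
    (i : ℕ) : p.getVert i ∈ s := by
  induction p generalizing i with
  | nil => exact hu
  | cons h q ih =>
    cases i with
    | zero => exact hu
    | succ i => simpa using ih h.2.1 i

lemma Reachable.mem_of_spanningInduce (h : (G.spanningInduce s).Reachable u w) (hu : u ∈ s) :
    w ∈ s := by
  obtain ⟨p⟩ := h
  simpa using p.getVert_mem_of_spanningInduce hu p.length

lemma Reachable.of_spanningInduce_insert {v : V} (hu : u ∈ s)
    (h : (G.spanningInduce (insert v s)).Reachable u w) :
    (G.spanningInduce s).Reachable u w ∨
      ∃ x ∈ s, G.Adj v x ∧ (G.spanningInduce s).Reachable u x := by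
  obtain ⟨p⟩ := h
  induction p with
  | nil => exact .inl .rfl
  | @cons u c w hadj p ih =>
    obtain ⟨-, hc, huc⟩ := hadj
    rcases hc with rfl | hc
    · exact .inr ⟨u, hu, huc.symm, .rfl⟩
    · have hstep : (G.spanningInduce s).Reachable u c := Adj.reachable ⟨hu, hc, huc⟩
      exact (ih hc).imp hstep.trans fun ⟨x, hx, hvx, hcx⟩ => ⟨x, hx, hvx, hstep.trans hcx⟩

lemma reachable_spanningInduce_insert_iff {v : V} (hv : v ∉ s) (hu : u ∈ s) :
    (G.spanningInduce (insert v s)).Reachable u v ↔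
      ∃ x ∈ s, G.Adj v x ∧ (G.spanningInduce s).Reachable u x := by
  refine ⟨fun h => (h.of_spanningInduce_insert hu).resolve_left
    fun h' => hv (h'.mem_of_spanningInduce hu), ?_⟩
  rintro ⟨x, hx, hvx, hux⟩
  exact (hux.mono (spanningInduce_mono (Set.subset_insert _ _))).trans
    (Adj.reachable ⟨.inr hx, .inl rfl, hvx.symm⟩)

end spanningInduce

lemma IsChordal.reachable_spanningInduce_neighbors (hG : G.IsChordal) {T : Set V} {v : V}
    (hv : v ∉ T) {u w : V} (hu : u ∈ T) (hw : w ∈ T) (hvu : G.Adj v u) (hvw : G.Adj v w)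
    (h : (G.spanningInduce T).Reachable u w) :
    (G.spanningInduce {x ∈ T | G.Adj v x}).Reachable u w := by
  induction hd : (G.spanningInduce T).dist u w using Nat.strong_induction_on
    generalizing u w with
  | _ d ih =>
  obtain ⟨p, hp⟩ := h.exists_walk_length_eq_dist
  have hpd : p.length = d := hp.trans hd
  have hT : ∀ i, p.getVert i ∈ T := p.getVert_mem_of_spanningInduce hu
  by_cases hmid : ∃ t, 0 < t ∧ t < d ∧ G.Adj v (p.getVert t)
  · obtain ⟨t, ht0, htd, hvt⟩ := hmid
    have h₁ := ih _ ((dist_le (p.take t)).trans_lt (by simp [hpd]; omega))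
      hu (hT t) hvu hvt ⟨p.take t⟩ rfl
    have h₂ := ih _ ((dist_le (p.drop t)).trans_lt (by simp [hpd]; omega))
      (hT t) hw hvt hvw ⟨p.drop t⟩ rfl
    exact h₁.trans h₂
  · push Not at hmid
    -- `v` sees only the ends of the shortest path `p`, which is induced
    have hcycle : cycleGraph (d + 2) ⊴ G := by
      refine cycleGraph_isIndContained_of_apex (c := p.getVert) (v := v) (fun i hi j hj hij => ?_)
        (fun i hi j hj => ?_) (fun i hi => ?_) (fun i _ hiv => hv (by rw [← hiv]; exact hT i))
      · exact p.eq_of_getVert_eq_of_length_eq_dist hp (by omega) (by omega) hij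
      · rw [← p.adj_getVert_iff_of_length_eq_dist hp (by omega) (by omega), spanningInduce_adj]
        simp [hT]
      · refine ⟨fun hvi => ?_, ?_⟩
        · by_contra! hi'
          exact hmid i (by omega) (by omega) hvi
        · rintro (rfl | rfl)
          · simpa using hvu
          · simpa [← hpd] using hvw
    have hd1 : d ≤ 1 := by
      by_contra!
      exact hG.not_cycleGraph_isIndContained (by omega) hcycle
    interval_cases d
    · rw [p.eq_of_length_eq_zero hpd]
    · have huw := p.adj_of_length_eq_one hpd
      exact Adj.reachable (by simp [hu, hw, hvu, hvw, huw.2.2])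

lemma card_image_connectedComponentMk_of_le {H H' : SimpleGraph V} (hle : H ≤ H')
    {S : Finset V} (hS : ∀ u ∈ S, ∀ w ∈ S, H'.Reachable u w → H.Reachable u w) :
    #(S.image H'.connectedComponentMk) = #(S.image H.connectedComponentMk) := by
  rw [← card_image_of_injOn (f := ConnectedComponent.map (Hom.ofLE hle)), image_image]
  · rfl
  · rintro _ hC _ hC' hCC'
    obtain ⟨u, hu, rfl⟩ := mem_image.mp hC
    obtain ⟨w, hw, rfl⟩ := mem_image.mp hC'
    simp only [ConnectedComponent.map_mk, Hom.coe_ofLE, id, ConnectedComponent.eq] at hCC' ⊢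
    exact hS u hu w hw hCC'


noncomputable def numComponentsOn (G : SimpleGraph V) (S : Finset V) : ℕ :=
  #(S.image (G.spanningInduce S).connectedComponentMk)

lemma card_image_connectedComponentMk_insert (H : SimpleGraph V) (S : Finset V) (v : V) :
    #((insert v S).image H.connectedComponentMk) =
      #((S.filter (¬ H.Reachable · v)).image H.connectedComponentMk) + 1 := by
  rw [← card_insert_of_notMem (a := H.connectedComponentMk v)]
  · congr 1
    ext C
    simp only [mem_image, mem_insert, mem_filter]
    constructor
    · rintro ⟨w, rfl | hw, rfl⟩
      · exact .inl rfl
      · by_cases hwv : H.Reachable w v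
        · exact .inl (ConnectedComponent.eq.mpr hwv)
        · exact .inr ⟨w, ⟨hw, hwv⟩, rfl⟩
    · rintro (rfl | ⟨w, ⟨hw, -⟩, rfl⟩)
      · exact ⟨v, .inl rfl, rfl⟩
      · exact ⟨w, .inr hw, rfl⟩
  · simp only [mem_image, mem_filter, not_exists, not_and]
    exact fun u ⟨_, huv⟩ h => huv (ConnectedComponent.eq.mp h)

/-- The second summand counts the components of `G[T]` that meet the neighbourhood of `v`. -/
lemma numComponentsOn_insert_add_card {T : Finset V} {v : V} (hv : v ∉ T) :
    G.numComponentsOn (insert v T) +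
      #((T.filter (G.Adj v)).image (G.spanningInduce T).connectedComponentMk) =
    G.numComponentsOn T + 1 := by
  set HS := G.spanningInduce (insert v ↑T)
  set HT := G.spanningInduce ↑T
  set Y := (T.filter (G.Adj v)).image HT.connectedComponentMk
  have hreach : ∀ u ∈ T, HS.Reachable u v ↔ HT.connectedComponentMk u ∈ Y := by
    intro u hu
    rw [reachable_spanningInduce_insert_iff (mem_coe.not.mpr hv) hu]
    simp [Y, HT, ConnectedComponent.eq, reachable_comm, and_assoc]
  set T' := T.filter (¬ HS.Reachable · v)
  have hT' : #(T'.image HS.connectedComponentMk) = #(T'.image HT.connectedComponentMk) := by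
    refine card_image_connectedComponentMk_of_le (spanningInduce_mono (Set.subset_insert _ _))
      fun u hu w _ huw => ?_
    rw [mem_filter] at hu
    refine (huw.of_spanningInduce_insert (mem_coe.mpr hu.1)).resolve_right fun hx => hu.2 ?_
    exact (reachable_spanningInduce_insert_iff (mem_coe.not.mpr hv) hu.1).mpr hx
  have hsdiff : T'.image HT.connectedComponentMk = T.image HT.connectedComponentMk \ Y := by
    rw [← filter_notMem_eq_sdiff, filter_image]
    exact congrArg _ (filter_congr fun u hu => (hreach u hu).not)
  have hYsub : Y ⊆ T.image HT.connectedComponentMk := image_subset_image (filter_subset _ _)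
  rw [numComponentsOn, numComponentsOn, coe_insert, card_image_connectedComponentMk_insert, hT',
    hsdiff, ← card_sdiff_add_card_eq_card hYsub]
  omega

lemma IsChordal.numComponentsOn_insert (hG : G.IsChordal) {T : Finset V} {v : V} (hv : v ∉ T) :
    G.numComponentsOn (insert v T) + G.numComponentsOn (T.filter (G.Adj v)) =
      G.numComponentsOn T + 1 := by
  have hN : #((T.filter (G.Adj v)).image (G.spanningInduce T).connectedComponentMk) =
      G.numComponentsOn (T.filter (G.Adj v)) := by
    rw [numComponentsOn, coe_filter]
    refine card_image_connectedComponentMk_of_le (spanningInduce_mono fun x hx => hx.1)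
      fun u hu w hw huw => ?_
    rw [mem_filter] at hu hw
    exact hG.reachable_spanningInduce_neighbors (mem_coe.not.mpr hv) hu.1 hw.1 hu.2 hw.2 huw
  rw [← hN, numComponentsOn_insert_add_card hv]

noncomputable def signedCliqueCount (G : SimpleGraph V) (S : Finset V) : ℤ :=
  ∑ I ∈ S.powerset.filter (fun I : Finset V => G.IsClique (I : Set V)), (-1) ^ #I

@[simp]
lemma signedCliqueCount_empty : G.signedCliqueCount ∅ = 1 := by
  simp [signedCliqueCount, filter_singleton]

lemma signedCliqueCount_insert {T : Finset V} {v : V} (hv : v ∉ T) :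
    G.signedCliqueCount (insert v T) =
      G.signedCliqueCount T - G.signedCliqueCount (T.filter (G.Adj v)) := by
  have hlink : T.powerset.filter (fun I : Finset V => G.IsClique (↑(insert v I) : Set V)) =
      (T.filter (G.Adj v)).powerset.filter (fun I : Finset V => G.IsClique (I : Set V)) := by
    ext I
    simp only [mem_filter, mem_powerset, coe_insert, subset_iff]
    grind [isClique_insert_of_notMem]
  rw [signedCliqueCount, signedCliqueCount, signedCliqueCount, sum_filter, sum_powerset_insert hv,
    ← sum_filter, ← sum_filter, hlink, sub_eq_add_neg, ← sum_neg_distrib]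
  refine congrArg _ (sum_congr rfl fun I hI => ?_)
  have hvI : v ∉ I := fun h => hv (mem_filter.mp (mem_powerset.mp (mem_filter.mp hI).1 h)).1
  rw [card_insert_of_notMem hvI, pow_succ, mul_neg_one]

theorem IsChordal.signedCliqueCount_eq (hG : G.IsChordal) (S : Finset V) :
    G.signedCliqueCount S = 1 - G.numComponentsOn S := by
  induction S using Finset.strongInduction with
  | H S ih =>
  rcases S.eq_empty_or_nonempty with rfl | ⟨v, hv⟩
  · simp [numComponentsOn]
  · have hvS : v ∉ S.erase v := notMem_erase v S
    have hrec := hG.numComponentsOn_insert hvS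
    rw [insert_erase hv] at hrec
    rw [← insert_erase hv, signedCliqueCount_insert hvS, insert_erase hv,
      ih _ (erase_ssubset hv), ih _ ((filter_subset _ _).trans_lt (erase_ssubset hv))]
    omega

lemma sum_cliqueComplex_subset_eq [Fintype V] (S : Finset V) :
    ∑ I ∈ G.cliqueComplex with I ⊆ S, (-1 : ℤ) ^ (#I - 1) = 1 - G.signedCliqueCount S := by
  have hfilter : G.cliqueComplex.filter (· ⊆ S) =
      (S.powerset.filter fun I : Finset V => G.IsClique (I : Set V)).erase ∅ := by
    ext I
    simp only [cliqueComplex, nonempty_iff_ne_empty, ne_eq, powerset_univ, mem_filter, mem_univ,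
      true_and, mem_erase, mem_powerset]
    tauto
  have hempty : ∅ ∈ S.powerset.filter fun I : Finset V => G.IsClique (I : Set V) := by simp
  rw [signedCliqueCount, ← add_sum_erase _ _ hempty, hfilter, card_empty, pow_zero,
    sub_add_cancel_left, ← sum_neg_distrib]
  refine sum_congr rfl fun I hI => ?_
  have hI : 0 < #I := card_pos.mpr (nonempty_iff_ne_empty.mpr (ne_of_mem_erase hI))
  conv_rhs => rw [← Nat.sub_add_cancel hI, pow_succ, mul_neg_one, neg_neg]

theorem IsChordal.sum_cliqueComplex_subset (hG : G.IsChordal) [Fintype V] (S : Finset V) :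
    ∑ I ∈ G.cliqueComplex with I ⊆ S, (-1 : ℤ) ^ (#I - 1) = G.numComponentsOn S := by
  rw [sum_cliqueComplex_subset_eq, hG.signedCliqueCount_eq, sub_sub_cancel]

end SimpleGraph

lemma sum_mul_measureReal_eq_integral {Ω ι : Type*} [MeasurableSpace Ω] (μ : Measure Ω)
    [IsFiniteMeasure μ] (s : Finset ι) (c : ι → ℝ) {E : ι → Set Ω}
    (hE : ∀ i ∈ s, MeasurableSet (E i)) :
    ∑ i ∈ s, c i * μ.real (E i) = ∫ ω, ∑ i ∈ s with ω ∈ E i, c i ∂μ := by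
  have hind : ∀ ω,
      ∑ i ∈ s with ω ∈ E i, c i = ∑ i ∈ s, (E i).indicator (fun _ => c i) ω := by
    simp [sum_filter, Set.indicator_apply]
  simp_rw [hind]
  rw [integral_finsetSum _ fun i hi => (integrable_const (c i)).indicator (hE i hi)]
  refine sum_congr rfl fun i hi => ?_
  rw [integral_indicator_const _ (hE i hi), smul_eq_mul, mul_comm]

theorem alternating_sum_nonneg {Ω V : Type*} [MeasurableSpace Ω] [Fintype V]
    (μ : Measure Ω) [IsProbabilityMeasure μ] (G : SimpleGraph V) (hG : G.IsChordal)
    (A : V → Set Ω) (hA : ∀ v, MeasurableSet (A v)) :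
    0 ≤ ∑ I ∈ G.cliqueComplex, (-1 : ℝ) ^ (I.card - 1) * (μ (⋂ i ∈ I, A i)).toReal := by
  simp_rw [← measureReal_def]
  rw [sum_mul_measureReal_eq_integral μ _ _ fun I _ => I.measurableSet_biInter fun i _ => hA i]
  refine integral_nonneg fun ω => ?_
  rw [Pi.zero_apply]
  have hmem : ∀ I : Finset V, ω ∈ ⋂ i ∈ I, A i ↔ I ⊆ univ.filter (ω ∈ A ·) := by
    simp [subset_iff]
  simp_rw [hmem]
  exact_mod_cast (hG.sum_cliqueComplex_subset (univ.filter (ω ∈ A ·))).trans_ge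
    (Int.natCast_nonneg _)
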